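/- arXiv:1011.1263 — 4 statements merged into one kernel-verified Lean document; each statement's English description precedes it below -/
import Mathlib

section
/- Fix p ∈ [1,2], an integer n ≥ 1, x ∈ ℝⁿ, and α ∈ (0,1). Suppose g₁,…,gₙ are {−1,+1}-valued random variables, each uniform, that are pairwise independent, and χ₁,…,χₙ are {0,1}-valued random variables with P[χᵢ = 1] = α, where the family (gᵢ) is independent of the family (χᵢ). Then E[|Σ_{i=1}^n gᵢχᵢxᵢ|^p] ≤ α·‖x‖_p^p. -/
open MeasureTheory ProbabilityTheory
open scoped ENNReal

/-!
Conditionally on the selectors `χ = b`, the sum is a Rademacher sum with coefficients `bᵢ xᵢ`.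
Since `t ↦ t ^ (p / 2)` is concave, Jensen bounds its `p`-th moment by the `p / 2`-th power of
its second moment, which pairwise independence makes `∑ bᵢ xᵢ ^ 2`. As `p / 2 ≤ 1`, the map
`t ↦ t ^ (p / 2)` is also subadditive, so `(∑ bᵢ xᵢ ^ 2) ^ (p / 2) ≤ ∑ bᵢ |xᵢ| ^ p`, and averaging
over the selectors gives `α ∑ |xᵢ| ^ p`.
-/

lemma Real.rpow_sum_le_sum_rpow {ι : Type*} (s : Finset ι) {f : ι → ℝ}
    (hf : ∀ i ∈ s, 0 ≤ f i) {q : ℝ} (hq0 : 0 < q) (hq1 : q ≤ 1) :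
    (∑ i ∈ s, f i) ^ q ≤ ∑ i ∈ s, f i ^ q := by
  induction s using Finset.cons_induction with
  | empty => simp [Real.zero_rpow hq0.ne']
  | cons a s _ ih =>
    rw [Finset.forall_mem_cons] at hf
    rw [Finset.sum_cons, Finset.sum_cons]
    calc (f a + ∑ i ∈ s, f i) ^ q ≤ f a ^ q + (∑ i ∈ s, f i) ^ q :=
          Real.rpow_add_le_add_rpow hf.1 (Finset.sum_nonneg hf.2) hq0.le hq1
      _ ≤ f a ^ q + ∑ i ∈ s, f i ^ q := add_le_add_right (ih hf.2) _

lemma Real.sq_rpow_div_two (x p : ℝ) : (x ^ 2) ^ (p / 2) = |x| ^ p := by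
  rw [← sq_abs, ← Real.rpow_natCast, ← Real.rpow_mul (abs_nonneg x)]
  congr 1
  push_cast
  ring

section

variable {Ω : Type*} [MeasurableSpace Ω] {P : Measure Ω}

lemma ProbabilityTheory.IndepFun.lintegral_comp_prodMk [IsFiniteMeasure P] {α β : Type*}
    [MeasurableSpace α] [MeasurableSpace β] {X : Ω → α} {Y : Ω → β} (hXY : IndepFun X Y P)
    (hX : Measurable X) (hY : Measurable Y) {f : α × β → ℝ≥0∞} (hf : Measurable f) :
    ∫⁻ ω, f (X ω, Y ω) ∂P = ∫⁻ ω', ∫⁻ ω, f (X ω, Y ω') ∂P ∂P := by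
  have hmap := (indepFun_iff_map_prod_eq_prod_map_map hX.aemeasurable hY.aemeasurable).1 hXY
  calc ∫⁻ ω, f (X ω, Y ω) ∂P = ∫⁻ z, f z ∂((P.map X).prod (P.map Y)) := by
        rw [← hmap, lintegral_map hf (hX.prodMk hY)]
    _ = ∫⁻ b, ∫⁻ a, f (a, b) ∂(P.map X) ∂(P.map Y) := lintegral_prod_symm' f hf
    _ = ∫⁻ ω', ∫⁻ ω, f (X ω, Y ω') ∂P ∂P := by
        rw [lintegral_map (hf.lintegral_prod_left' (μ := P.map X)) hY]
        refine lintegral_congr fun ω' ↦ ?_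
        exact lintegral_map (hf.comp (measurable_id.prodMk measurable_const)) hX

lemma MeasureTheory.MemLp.integrable_abs_rpow [IsFiniteMeasure P] {f : Ω → ℝ} {q : ℝ}
    (hq : 0 ≤ q) (hf : MemLp f (ENNReal.ofReal q) P) : Integrable (fun ω ↦ |f ω| ^ q) P := by
  simpa [ENNReal.toReal_ofReal hq] using hf.integrable_norm_rpow'

lemma integrable_of_mem_zero_one [IsFiniteMeasure P] {χ : Ω → ℝ} (hχ : Measurable χ)
    (hval : ∀ ω, χ ω = 0 ∨ χ ω = 1) : Integrable χ P :=
  .of_bound hχ.aestronglyMeasurable 1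
    (ae_of_all _ fun ω ↦ by rcases hval ω with h | h <;> simp [h])

lemma integral_eq_measureReal_of_mem_zero_one {χ : Ω → ℝ} (hχ : Measurable χ)
    (hval : ∀ ω, χ ω = 0 ∨ χ ω = 1) : ∫ ω, χ ω ∂P = P.real {ω | χ ω = 1} := by
  have hind : ∀ ω, χ ω = {ω | χ ω = 1}.indicator 1 ω := fun ω ↦ by
    rcases hval ω with h | h <;> simp [h]
  rw [integral_congr_ae (ae_of_all _ hind)]
  exact integral_indicator_one (hχ (measurableSet_singleton 1))

variable [IsProbabilityMeasure P]

lemma integral_abs_rpow_le_integral_sq_rpow {f : Ω → ℝ} (hf : MemLp f 2 P) {p : ℝ}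
    (hp0 : 0 < p) (hp2 : p ≤ 2) :
    ∫ ω, |f ω| ^ p ∂P ≤ (∫ ω, f ω ^ 2 ∂P) ^ (p / 2) := by
  have hJensen := (Real.concaveOn_rpow (p := p / 2) (by positivity) (by linarith)).le_map_integral
    (Real.continuous_rpow_const (by positivity)).continuousOn isClosed_Ici
    (ae_of_all _ fun ω ↦ sq_nonneg (f ω)) hf.integrable_sq ?_
  · simpa only [Real.sq_rpow_div_two] using hJensen
  · simpa only [Function.comp_def, Real.sq_rpow_div_two] using
      (hf.mono_exponent (p := ENNReal.ofReal p)
        (by simpa using ENNReal.ofReal_le_ofReal hp2)).integrable_abs_rpow hp0.le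

end

section

variable {Ω : Type*} [MeasurableSpace Ω]

structure IsRademacher (g : Ω → ℝ) (P : Measure Ω) : Prop where
  measurable : Measurable g
  eq_one_or_eq_neg_one : ∀ ω, g ω = 1 ∨ g ω = -1
  measure_eq_one_eq_half : P {ω | g ω = 1} = 1 / 2

namespace IsRademacher

variable {P : Measure Ω} [IsProbabilityMeasure P] {g : Ω → ℝ}

lemma memLp (hg : IsRademacher g P) (q : ℝ≥0∞) : MemLp g q P :=
  .of_bound hg.measurable.aestronglyMeasurable 1
    (ae_of_all _ fun ω ↦ by rcases hg.eq_one_or_eq_neg_one ω with h | h <;> simp [h])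

lemma integral_eq_zero (hg : IsRademacher g P) : ∫ ω, g ω ∂P = 0 := by
  have hχ : ∀ ω, (g ω + 1) / 2 = 0 ∨ (g ω + 1) / 2 = 1 := fun ω ↦ by
    rcases hg.eq_one_or_eq_neg_one ω with h | h <;> norm_num [h]
  have hset : {ω | (g ω + 1) / 2 = 1} = {ω | g ω = 1} := by
    ext ω
    rcases hg.eq_one_or_eq_neg_one ω with h | h <;> norm_num [h]
  have hmean := integral_eq_measureReal_of_mem_zero_one (P := P)
    ((hg.measurable.add_const 1).div_const 2) hχ
  rw [hset, measureReal_def, hg.measure_eq_one_eq_half, integral_div,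
    integral_add ((hg.memLp 1).integrable le_rfl) (integrable_const 1)] at hmean
  norm_num at hmean
  linarith

lemma variance_eq_one (hg : IsRademacher g P) : variance g P = 1 := by
  have hsq : ∀ ω, g ω ^ 2 = 1 := fun ω ↦ by
    rcases hg.eq_one_or_eq_neg_one ω with h | h <;> simp [h]
  simp [variance_of_integral_eq_zero hg.measurable.aemeasurable hg.integral_eq_zero, hsq]

end IsRademacher

variable {P : Measure Ω} [IsProbabilityMeasure P]

lemma memLp_sum_rademacher_mul {ι : Type*} [Fintype ι] {g : ι → Ω → ℝ}
    (hg : ∀ i, IsRademacher (g i) P) (c : ι → ℝ) (q : ℝ≥0∞) :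
    MemLp (fun ω ↦ ∑ i, g i ω * c i) q P :=
  memLp_finsetSum _ fun i _ ↦ ((hg i).memLp q).mul_const (c i)

lemma integral_sq_sum_rademacher_mul {ι : Type*} [Fintype ι] {g : ι → Ω → ℝ}
    (hg : ∀ i, IsRademacher (g i) P) (hpair : Pairwise fun i j ↦ IndepFun (g i) (g j) P)
    (c : ι → ℝ) : ∫ ω, (∑ i, g i ω * c i) ^ 2 ∂P = ∑ i, c i ^ 2 := by
  have hmemLp i : MemLp (fun ω ↦ g i ω * c i) 2 P := ((hg i).memLp 2).mul_const (c i)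
  have hmean : ∫ ω, ∑ i, g i ω * c i ∂P = 0 := by
    rw [integral_finsetSum _ fun i _ ↦ (hmemLp i).integrable one_le_two]
    simp [integral_mul_const, (hg _).integral_eq_zero]
  have hvar := IndepFun.variance_sum (X := fun i ω ↦ g i ω * c i) (s := Finset.univ)
    (fun i _ ↦ hmemLp i)
    (fun i _ j _ hij ↦ (hpair hij).comp (measurable_id.mul_const _) (measurable_id.mul_const _))
  rw [← variance_of_integral_eq_zero
    (memLp_sum_rademacher_mul hg c 1).aestronglyMeasurable.aemeasurable hmean]
  convert hvar using 2 with i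
  · ext ω
    simp
  · rw [variance_mul_const, (hg i).variance_eq_one, one_mul]

lemma integral_abs_sum_rademacher_mul_rpow_le {ι : Type*} [Fintype ι] {g : ι → Ω → ℝ}
    (hg : ∀ i, IsRademacher (g i) P) (hpair : Pairwise fun i j ↦ IndepFun (g i) (g j) P)
    {p : ℝ} (hp0 : 0 < p) (hp2 : p ≤ 2) (c : ι → ℝ) :
    ∫ ω, |∑ i, g i ω * c i| ^ p ∂P ≤ ∑ i, |c i| ^ p :=
  calc ∫ ω, |∑ i, g i ω * c i| ^ p ∂P
      ≤ (∫ ω, (∑ i, g i ω * c i) ^ 2 ∂P) ^ (p / 2) :=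
        integral_abs_rpow_le_integral_sq_rpow (memLp_sum_rademacher_mul hg c 2) hp0 hp2
    _ = (∑ i, c i ^ 2) ^ (p / 2) := by rw [integral_sq_sum_rademacher_mul hg hpair c]
    _ ≤ ∑ i, (c i ^ 2) ^ (p / 2) :=
        Real.rpow_sum_le_sum_rpow _ (fun i _ ↦ sq_nonneg (c i)) (by positivity) (by linarith)
    _ = ∑ i, |c i| ^ p := by simp only [Real.sq_rpow_div_two]

lemma integral_abs_sum_rademacher_mul_selector_rpow_le {ι : Type*} [Fintype ι]
    {g χ : ι → Ω → ℝ} (hg : ∀ i, IsRademacher (g i) P)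
    (hpair : Pairwise fun i j ↦ IndepFun (g i) (g j) P) (hχm : ∀ i, Measurable (χ i))
    (hχval : ∀ i ω, χ i ω = 0 ∨ χ i ω = 1)
    (hind : IndepFun (fun ω i ↦ g i ω) (fun ω i ↦ χ i ω) P)
    {p : ℝ} (hp0 : 0 < p) (hp2 : p ≤ 2) (x : ι → ℝ) :
    ∫ ω, |∑ i, g i ω * χ i ω * x i| ^ p ∂P ≤
      ∫ ω, ∑ i, χ i ω * |x i| ^ p ∂P := by
  have hgm i : Measurable (g i) := (hg i).measurable
  have hinner ω' : ∫⁻ ω, ENNReal.ofReal (|∑ i, g i ω * (χ i ω' * x i)| ^ p) ∂P ≤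
      ENNReal.ofReal (∑ i, χ i ω' * |x i| ^ p) := by
    rw [← ofReal_integral_eq_lintegral_ofReal
      ((memLp_sum_rademacher_mul hg _ _).integrable_abs_rpow hp0.le)
      (ae_of_all _ fun ω ↦ by positivity)]
    refine ENNReal.ofReal_le_ofReal
      ((integral_abs_sum_rademacher_mul_rpow_le hg hpair hp0 hp2 _).trans_eq ?_)
    refine Finset.sum_congr rfl fun i _ ↦ ?_
    rcases hχval i ω' with h | h <;> simp [h, Real.zero_rpow hp0.ne']
  have hrhs_nonneg : 0 ≤ᵐ[P] fun ω ↦ ∑ i, χ i ω * |x i| ^ p :=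
    ae_of_all _ fun ω ↦ Finset.sum_nonneg fun i _ ↦ by
      rcases hχval i ω with h | h <;> simp [h]; positivity
  simp_rw [mul_assoc]
  rw [integral_eq_lintegral_of_nonneg_ae (ae_of_all _ fun ω ↦ by positivity)
    (by fun_prop (disch := exact hp0.le))]
  refine ENNReal.toReal_le_of_le_ofReal (integral_nonneg_of_ae hrhs_nonneg) ?_
  -- conditioning on `χ` happens for lower integrals, where Tonelli needs no integrability
  calc ∫⁻ ω, ENNReal.ofReal (|∑ i, g i ω * (χ i ω * x i)| ^ p) ∂P
      = ∫⁻ ω', ∫⁻ ω, ENNReal.ofReal (|∑ i, g i ω * (χ i ω' * x i)| ^ p) ∂P ∂P :=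
        hind.lintegral_comp_prodMk (measurable_pi_lambda _ hgm)
          (measurable_pi_lambda _ hχm)
          (f := fun z ↦ ENNReal.ofReal (|∑ i, z.1 i * (z.2 i * x i)| ^ p)) (by fun_prop)
    _ ≤ ∫⁻ ω', ENNReal.ofReal (∑ i, χ i ω' * |x i| ^ p) ∂P := lintegral_mono hinner
    _ = ENNReal.ofReal (∫ ω, ∑ i, χ i ω * |x i| ^ p ∂P) :=
        (ofReal_integral_eq_lintegral_ofReal (integrable_finsetSum _ fun i _ ↦
          (integrable_of_mem_zero_one (hχm i) (hχval i)).mul_const _) hrhs_nonneg).symm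

end

theorem expected_rpow_randomized_sum_le_general (p : ℝ) (hp : p ∈ Set.Icc (1 : ℝ) 2)
    (n : ℕ) (x : Fin n → ℝ) (α : ℝ) (hα : α ∈ Set.Ioo (0 : ℝ) 1)
    {Ω : Type} [MeasurableSpace Ω] (P : Measure Ω) [IsProbabilityMeasure P]
    (g χ : Fin n → Ω → ℝ)
    (hgm : ∀ i, Measurable (g i)) (hχm : ∀ i, Measurable (χ i))
    (hgval : ∀ i ω, g i ω = 1 ∨ g i ω = -1)
    (hχval : ∀ i ω, χ i ω = 0 ∨ χ i ω = 1)
    (hgunif : ∀ i, P {ω | g i ω = 1} = 1 / 2)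
    (hχprob : ∀ i, P {ω | χ i ω = 1} = ENNReal.ofReal α)
    (hgpair : Pairwise fun i j => IndepFun (g i) (g j) P)
    (hfam : IndepFun (fun ω i => g i ω) (fun ω i => χ i ω) P) :
    ∫ ω, |∑ i, g i ω * χ i ω * x i| ^ p ∂P ≤ α * ∑ i, |x i| ^ p := by
  obtain ⟨hp1, hp2⟩ := hp
  have hg i : IsRademacher (g i) P := ⟨hgm i, hgval i, hgunif i⟩
  have hχint i : Integrable (χ i) P := integrable_of_mem_zero_one (hχm i) (hχval i)
  calc ∫ ω, |∑ i, g i ω * χ i ω * x i| ^ p ∂P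
      ≤ ∫ ω, ∑ i, χ i ω * |x i| ^ p ∂P :=
        integral_abs_sum_rademacher_mul_selector_rpow_le hg hgpair hχm hχval hfam
          (by linarith) hp2 x
    _ = α * ∑ i, |x i| ^ p := by
        rw [integral_finsetSum _ fun i _ ↦ (hχint i).mul_const _, Finset.mul_sum]
        refine Finset.sum_congr rfl fun i _ ↦ ?_
        rw [integral_mul_const, integral_eq_measureReal_of_mem_zero_one (hχm i) (hχval i),
          measureReal_def, hχprob i, ENNReal.toReal_ofReal hα.1.le]

/-- For `p ∈ [1,2]`, pairwise independent uniform signs `gᵢ`, and `{0,1}`-valued `χᵢ`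
with `P[χᵢ = 1] = α`, where the family `(gᵢ)` is independent of the family `(χᵢ)`,
we have `E[|Σᵢ gᵢ χᵢ xᵢ|^p] ≤ α ‖x‖_p^p`. -/
theorem expected_rpow_randomized_sum_le (p : ℝ) (hp : p ∈ Set.Icc (1 : ℝ) 2)
    (n : ℕ) (hn : 1 ≤ n) (x : Fin n → ℝ) (α : ℝ) (hα : α ∈ Set.Ioo (0 : ℝ) 1)
    {Ω : Type} [MeasurableSpace Ω] (P : Measure Ω) [IsProbabilityMeasure P]
    (g χ : Fin n → Ω → ℝ)
    (hgm : ∀ i, Measurable (g i)) (hχm : ∀ i, Measurable (χ i))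
    (hgval : ∀ i ω, g i ω = 1 ∨ g i ω = -1)
    (hχval : ∀ i ω, χ i ω = 0 ∨ χ i ω = 1)
    (hgunif : ∀ i, P {ω | g i ω = 1} = 1 / 2)
    (hχprob : ∀ i, P {ω | χ i ω = 1} = ENNReal.ofReal α)
    (hgpair : Pairwise fun i j => IndepFun (g i) (g j) P)
    (hfam : IndepFun (fun ω i => g i ω) (fun ω i => χ i ω) P) :
    ∫ ω, |∑ i, g i ω * χ i ω * x i| ^ p ∂P ≤ α * ∑ i, |x i| ^ p :=
  expected_rpow_randomized_sum_le_general p hp n x α hα P g χ hgm hχm hgval hχval hgunif hχprob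
    hgpair hfam
end

section
/- Fix p ∈ [1,2], an integer n ≥ 1, x ∈ ℝⁿ, and α ∈ (0,1). Suppose g₁,…,gₙ are {−1,+1}-valued random variables, each uniform and pairwise independent, and χ₁,…,χₙ are pairwise independent {0,1}-valued random variables with P[χᵢ = 1] = α, where the family (gᵢ) is independent of the family (χᵢ). Then with probability at least 7/9, |Σ_{i=1}^n gᵢχᵢxᵢ|^p ≤ 3^{2+p}·α·‖x‖_p^p. -/
open MeasureTheory ProbabilityTheory
open scoped ENNReal NNReal

/-!
Write `S = ∑ gᵢ (χᵢ xᵢ)`. The selected mass `∑ χᵢ |xᵢ|^p` has mean `α ‖x‖_p^p`, so by Markov's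
inequality it is at most `9 α ‖x‖_p^p` outside an event of probability at most `1/9`. Conditionally on
`χ`, which takes finitely many values and is independent of the signs, `S` is a sum of pairwise
independent centred terms with second moment `∑ (χᵢ xᵢ)²`, so Markov's inequality for `S²` gives
`S² ≤ 9 ∑ (χᵢ xᵢ)²` outside another such event. On the remaining event, since the
`ℓ²` norm is dominated by the `ℓ^p` norm for `p ≤ 2`,
`|S| ≤ 3 ‖(χᵢ xᵢ)ᵢ‖_p ≤ 3 (9 α ‖x‖_p^p)^{1/p}`.
-/

lemma Real.sum_rpow_le_rpow_sum {ι : Type*} (s : Finset ι) {f : ι → ℝ} (hf : ∀ i ∈ s, 0 ≤ f i)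
    {q : ℝ} (hq : 1 ≤ q) : ∑ i ∈ s, f i ^ q ≤ (∑ i ∈ s, f i) ^ q := by
  classical
  induction s using Finset.induction_on with
  | empty => simp [Real.zero_rpow (by linarith : q ≠ 0)]
  | insert a s ha ih =>
    rw [Finset.forall_mem_insert] at hf
    rw [Finset.sum_insert ha, Finset.sum_insert ha]
    calc f a ^ q + ∑ i ∈ s, f i ^ q ≤ f a ^ q + (∑ i ∈ s, f i) ^ q := by gcongr; exact ih hf.2
      _ ≤ _ := Real.add_rpow_le_rpow_add hf.1 (Finset.sum_nonneg hf.2) hq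

lemma sum_sq_le_rpow_sum_abs_rpow {ι : Type*} (s : Finset ι) (v : ι → ℝ) {p : ℝ} (hp0 : 0 < p)
    (hp2 : p ≤ 2) : ∑ i ∈ s, v i ^ 2 ≤ (∑ i ∈ s, |v i| ^ p) ^ (2 / p) :=
  calc ∑ i ∈ s, v i ^ 2 = ∑ i ∈ s, (|v i| ^ p) ^ (2 / p) := by
        refine Finset.sum_congr rfl fun i _ => ?_
        rw [← Real.rpow_mul (abs_nonneg _), mul_div_cancel₀ _ hp0.ne', Real.rpow_two, sq_abs]
    _ ≤ _ := Real.sum_rpow_le_rpow_sum s (fun i _ => by positivity) ((one_le_div hp0).mpr hp2)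

lemma abs_rpow_le_of_sq_le_mul_sum_sq {ι : Type*} (s : Finset ι) {v : ι → ℝ} {p K c z : ℝ}
    (hp0 : 0 < p) (hp2 : p ≤ 2) (hK : 0 ≤ K) (hz : z ^ 2 ≤ K ^ 2 * ∑ i ∈ s, v i ^ 2)
    (hv : ∑ i ∈ s, |v i| ^ p ≤ c) : |z| ^ p ≤ K ^ p * c := by
  have hc : 0 ≤ c := (Finset.sum_nonneg fun i _ => by positivity).trans hv
  have hsq : |z| ^ 2 ≤ (K * c ^ p⁻¹) ^ 2 :=
    calc |z| ^ 2 = z ^ 2 := sq_abs z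
      _ ≤ K ^ 2 * (∑ i ∈ s, |v i| ^ p) ^ (2 / p) :=
        hz.trans (by gcongr; exact sum_sq_le_rpow_sum_abs_rpow s v hp0 hp2)
      _ ≤ K ^ 2 * c ^ (2 / p) := by gcongr
      _ = (K * c ^ p⁻¹) ^ 2 := by
        rw [mul_pow, ← Real.rpow_natCast (c ^ p⁻¹), ← Real.rpow_mul hc, div_eq_inv_mul]
        norm_num
  have habs : |z| ≤ K * c ^ p⁻¹ :=
    (pow_le_pow_iff_left₀ (abs_nonneg z) (by positivity) two_ne_zero).mp hsq
  calc |z| ^ p ≤ (K * c ^ p⁻¹) ^ p := by gcongr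
    _ = K ^ p * c := by rw [Real.mul_rpow hK (by positivity), Real.rpow_inv_rpow hc hp0.ne']

lemma abs_mul_rpow_of_eq_zero_or_eq_one {b : ℝ} (hb : b = 0 ∨ b = 1) (x : ℝ) {p : ℝ}
    (hp : p ≠ 0) : |b * x| ^ p = b * |x| ^ p := by
  rcases hb with rfl | rfl <;> simp [Real.zero_rpow hp]

section

variable {Ω : Type*} [MeasurableSpace Ω] {μ : Measure Ω}

lemma one_sub_add_le_measure_of_compl_subset_union [IsProbabilityMeasure μ] {E B₁ B₂ : Set Ω}
    {a b : ℝ≥0∞} (hE : Eᶜ ⊆ B₁ ∪ B₂) (h₁ : μ B₁ ≤ a) (h₂ : μ B₂ ≤ b) : 1 - (a + b) ≤ μ E := by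
  rw [tsub_le_iff_right]
  calc 1 = μ (E ∪ Eᶜ) := by rw [Set.union_compl_self, measure_univ]
    _ ≤ μ E + μ (B₁ ∪ B₂) := (measure_union_le E Eᶜ).trans (by gcongr)
    _ ≤ μ E + (a + b) := by gcongr; exact (measure_union_le B₁ B₂).trans (add_le_add h₁ h₂)

lemma measure_mul_integral_lt_le [IsFiniteMeasure μ] {f : Ω → ℝ} (hf : 0 ≤ᵐ[μ] f)
    (hfi : Integrable f μ) {t : ℝ} (ht : 0 < t) :
    μ {ω | t * ∫ ω, f ω ∂μ < f ω} ≤ ENNReal.ofReal t⁻¹ := by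
  set m := ∫ ω, f ω ∂μ
  rcases (integral_nonneg_of_ae hf).eq_or_lt with hm | hm
  · have hf0 : f =ᵐ[μ] 0 := (integral_eq_zero_iff_of_nonneg_ae hf hfi).mp hm.symm
    have hnull : μ {ω | t * m < f ω} = 0 := by
      refine measure_mono_null (fun ω (hω : _ < f ω) => ?_) (ae_iff.mp hf0)
      rw [show m = 0 from hm.symm, mul_zero] at hω
      exact hω.ne'
    simp [hnull]
  · have hmarkov := mul_meas_ge_le_integral_of_nonneg hf hfi (t * m)
    have hreal : μ.real {ω | t * m ≤ f ω} ≤ t⁻¹ := by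
      rw [← mul_one t⁻¹, le_inv_mul_iff₀ ht]
      nlinarith
    calc μ {ω | t * m < f ω} ≤ μ {ω | t * m ≤ f ω} := measure_mono fun ω (hω : _ < f ω) => hω.le
      _ = ENNReal.ofReal (μ.real {ω | t * m ≤ f ω}) :=
        (ofReal_measureReal (measure_ne_top _ _)).symm
      _ ≤ ENNReal.ofReal t⁻¹ := ENNReal.ofReal_le_ofReal hreal

lemma measure_mem_le_of_indepFun [IsProbabilityMeasure μ] {α β : Type*} [MeasurableSpace α]
    [MeasurableSpace β] [MeasurableSingletonClass β] {X : Ω → α} {Y : Ω → β}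
    (hXY : IndepFun X Y μ) (hY : Measurable Y) (hYc : (Set.range Y).Countable)
    {S : β → Set α} (hS : ∀ b, MeasurableSet (S b)) {δ : ℝ≥0∞} (hδ : ∀ b, μ (X ⁻¹' S b) ≤ δ) :
    μ {ω | X ω ∈ S (Y ω)} ≤ δ := by
  have : Countable (Set.range Y) := hYc.to_subtype
  have hsub : {ω | X ω ∈ S (Y ω)} ⊆ ⋃ b : Set.range Y, X ⁻¹' S b ∩ Y ⁻¹' {(b : β)} :=
    fun ω hω => Set.mem_iUnion.mpr ⟨⟨Y ω, ω, rfl⟩, hω, rfl⟩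
  calc μ {ω | X ω ∈ S (Y ω)} ≤ ∑' b : Set.range Y, μ (X ⁻¹' S b ∩ Y ⁻¹' {(b : β)}) :=
        (measure_mono hsub).trans (measure_iUnion_le _)
    _ = ∑' b : Set.range Y, μ (X ⁻¹' S b) * μ (Y ⁻¹' {(b : β)}) := by
        congr 1 with b
        exact hXY.measure_inter_preimage_eq_mul _ _ (hS b) (measurableSet_singleton _)
    _ ≤ ∑' b : Set.range Y, δ * μ (Y ⁻¹' {(b : β)}) := by gcongr with b; exact hδ b
    _ = δ := by
        rw [ENNReal.tsum_mul_left, tsum_measure_preimage_singleton hYc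
          fun b _ => hY (measurableSet_singleton b), Set.preimage_range, measure_univ, mul_one]

lemma integral_eq_of_eq_zero_or_eq_one {χ : Ω → ℝ} (hm : Measurable χ)
    (hval : ∀ ω, χ ω = 0 ∨ χ ω = 1) {α : ℝ} (hα : 0 ≤ α)
    (h1 : μ {ω | χ ω = 1} = ENNReal.ofReal α) : ∫ ω, χ ω ∂μ = α := by
  have hχ : χ = {ω | χ ω = 1}.indicator 1 := by
    funext ω
    rcases hval ω with h | h <;> simp [Set.indicator, h]
  have hA : MeasurableSet {ω | χ ω = 1} := hm (measurableSet_singleton 1)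
  rw [hχ, integral_indicator_one hA, measureReal_def, h1,
    ENNReal.toReal_ofReal hα]

lemma measure_mul_mul_sum_lt_sum_mul_le [IsFiniteMeasure μ] {ι : Type*} [Fintype ι]
    {χ : ι → Ω → ℝ} (hχm : ∀ i, Measurable (χ i)) (hχval : ∀ i ω, χ i ω = 0 ∨ χ i ω = 1)
    {α : ℝ} (hα : 0 ≤ α) (hχprob : ∀ i, μ {ω | χ i ω = 1} = ENNReal.ofReal α)
    {w : ι → ℝ} (hw : ∀ i, 0 ≤ w i) {t : ℝ} (ht : 0 < t) :
    μ {ω | t * (α * ∑ i, w i) < ∑ i, χ i ω * w i} ≤ ENNReal.ofReal t⁻¹ := by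
  have hχint : ∀ i, Integrable (χ i) μ := fun i =>
    Integrable.of_bound (hχm i).aestronglyMeasurable 1 (ae_of_all _ fun ω => by
      rcases hχval i ω with h | h <;> simp [h])
  have hmean : ∫ ω, ∑ i, χ i ω * w i ∂μ = α * ∑ i, w i := by
    rw [integral_finsetSum _ fun i _ => (hχint i).mul_const _, Finset.mul_sum]
    simp [integral_mul_const, integral_eq_of_eq_zero_or_eq_one (hχm _) (hχval _) hα (hχprob _)]
  refine hmean ▸ measure_mul_integral_lt_le (ae_of_all _ fun ω => Finset.sum_nonneg fun i _ => ?_)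
    (integrable_finsetSum _ fun i _ => (hχint i).mul_const _) ht
  rcases hχval i ω with h | h <;> simp [h, hw i]

lemma integral_eq_zero_of_eq_one_or_eq_neg_one [IsProbabilityMeasure μ] {g : Ω → ℝ}
    (hm : Measurable g) (hval : ∀ ω, g ω = 1 ∨ g ω = -1) (h1 : μ {ω | g ω = 1} = 1 / 2) :
    ∫ ω, g ω ∂μ = 0 := by
  have hg : g = fun ω => 2 * {ω | g ω = 1}.indicator 1 ω - 1 := by
    funext ω
    rcases hval ω with h | h <;> norm_num [Set.indicator, h]
  have hA : MeasurableSet {ω | g ω = 1} := hm (measurableSet_singleton 1)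
  rw [hg, integral_sub ((integrable_const 1).indicator hA |>.const_mul 2) (integrable_const 1),
    integral_const_mul, integral_indicator_one hA, measureReal_def, h1]
  simp

lemma memLp_of_eq_one_or_eq_neg_one [IsFiniteMeasure μ] {g : Ω → ℝ} (hm : Measurable g)
    (hval : ∀ ω, g ω = 1 ∨ g ω = -1) (q : ℝ≥0∞) : MemLp g q μ :=
  MemLp.of_bound hm.aestronglyMeasurable 1 (ae_of_all _ fun ω => by
    rcases hval ω with h | h <;> simp [h])

section Signs

variable [IsProbabilityMeasure μ] {ι : Type*} [Fintype ι] {g : ι → Ω → ℝ}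
  (hgm : ∀ i, Measurable (g i)) (hgval : ∀ i ω, g i ω = 1 ∨ g i ω = -1)
  (hg0 : ∀ i, ∫ ω, g i ω ∂μ = 0) (hgpair : Pairwise fun i j => IndepFun (g i) (g j) μ)
include hgm hgval hg0 hgpair

lemma integral_sum_mul_sq_of_pairwise_indepFun (y : ι → ℝ) :
    ∫ ω, (∑ i, g i ω * y i) ^ 2 ∂μ = ∑ i, y i ^ 2 := by
  set X : ι → Ω → ℝ := fun i ω => g i ω * y i
  have hX : ∀ i, MemLp (X i) 2 μ := fun i =>
    (memLp_of_eq_one_or_eq_neg_one (hgm i) (hgval i) 2).mul_const (y i)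
  have hsum : (fun ω => ∑ i, X i ω) = ∑ i, X i := by ext ω; simp
  have hmean : ∫ ω, ∑ i, X i ω ∂μ = 0 := by
    rw [integral_finsetSum _ fun i _ => (hX i).integrable one_le_two]
    simp [X, integral_mul_const, hg0]
  have hvar : ∀ i, variance (g i) μ = 1 := fun i => by
    have hsq : ∀ ω, g i ω ^ 2 = 1 := fun ω => by rcases hgval i ω with h | h <;> simp [h]
    simp [variance_of_integral_eq_zero (hgm i).aemeasurable (hg0 i), hsq]
  calc ∫ ω, (∑ i, X i ω) ^ 2 ∂μ = variance (∑ i, X i) μ := by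
        rw [← hsum, variance_of_integral_eq_zero (by fun_prop) hmean]
    _ = ∑ i, variance (X i) μ := IndepFun.variance_sum (fun i _ => hX i)
        fun i _ j _ hij => (hgpair hij).comp (measurable_id.mul_const _) (measurable_id.mul_const _)
    _ = ∑ i, y i ^ 2 := by simp [X, variance_mul_const, hvar]

lemma measure_mul_sum_sq_lt_sq_le (y : ι → ℝ) {t : ℝ} (ht : 0 < t) :
    μ {ω | t * ∑ i, y i ^ 2 < (∑ i, g i ω * y i) ^ 2} ≤ ENNReal.ofReal t⁻¹ := by
  have hint : Integrable (fun ω => (∑ i, g i ω * y i) ^ 2) μ :=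
    (memLp_finsetSum _ fun i _ =>
      (memLp_of_eq_one_or_eq_neg_one (hgm i) (hgval i) 2).mul_const (y i)).integrable_sq
  simpa [integral_sum_mul_sq_of_pairwise_indepFun hgm hgval hg0 hgpair y] using
    measure_mul_integral_lt_le (ae_of_all _ fun ω => sq_nonneg _) hint ht

lemma measure_mul_sum_sq_lt_sq_le_of_indepFun {Y : Ω → ι → ℝ} (hY : Measurable Y)
    (hYc : (Set.range Y).Countable) (hind : IndepFun (fun ω i => g i ω) Y μ) {t : ℝ}
    (ht : 0 < t) :
    μ {ω | t * ∑ i, Y ω i ^ 2 < (∑ i, g i ω * Y ω i) ^ 2} ≤ ENNReal.ofReal t⁻¹ :=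
  measure_mem_le_of_indepFun (S := fun y => {a | t * ∑ i, y i ^ 2 < (∑ i, a i * y i) ^ 2})
    hind hY hYc (fun _ => measurableSet_lt (by fun_prop) (by fun_prop))
    fun y => measure_mul_sum_sq_lt_sq_le hgm hgval hg0 hgpair y ht

end Signs

end

theorem rpow_randomized_sum_le_whp_general (p : ℝ) (hp : p ∈ Set.Icc (1 : ℝ) 2)
    (n : ℕ) (x : Fin n → ℝ) (α : ℝ) (hα : α ∈ Set.Ioo (0 : ℝ) 1)
    {Ω : Type} [MeasurableSpace Ω] (P : Measure Ω) [IsProbabilityMeasure P]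
    (g χ : Fin n → Ω → ℝ)
    (hgm : ∀ i, Measurable (g i)) (hχm : ∀ i, Measurable (χ i))
    (hgval : ∀ i ω, g i ω = 1 ∨ g i ω = -1)
    (hχval : ∀ i ω, χ i ω = 0 ∨ χ i ω = 1)
    (hgunif : ∀ i, P {ω | g i ω = 1} = 1 / 2)
    (hχprob : ∀ i, P {ω | χ i ω = 1} = ENNReal.ofReal α)
    (hgpair : Pairwise fun i j => IndepFun (g i) (g j) P)
    (hfam : IndepFun (fun ω i => g i ω) (fun ω i => χ i ω) P) :
    (7 : ℝ≥0∞) / 9 ≤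
      P {ω | |∑ i, g i ω * χ i ω * x i| ^ p ≤ 3 ^ (2 + p) * α * ∑ i, |x i| ^ p} := by
  have hp0 : 0 < p := by linarith [hp.1]
  set M := ∑ i, |x i| ^ p
  have hmass : P {ω | 9 * (α * M) < ∑ i, χ i ω * |x i| ^ p} ≤ ENNReal.ofReal 9⁻¹ :=
    measure_mul_mul_sum_lt_sum_mul_le hχm hχval hα.1.le hχprob (fun i => by positivity)
      (by norm_num)
  have hY : (Set.range fun ω i => χ i ω * x i).Countable := by
    refine ((Set.Finite.pi' fun i => Set.toFinite {0, x i}).subset ?_).countable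
    rintro _ ⟨ω, rfl⟩ i
    rcases hχval i ω with h | h <;> simp [h]
  have hsign : P {ω | 9 * ∑ i, (χ i ω * x i) ^ 2 < (∑ i, g i ω * (χ i ω * x i)) ^ 2}
      ≤ ENNReal.ofReal 9⁻¹ :=
    measure_mul_sum_sq_lt_sq_le_of_indepFun hgm hgval
      (fun i => integral_eq_zero_of_eq_one_or_eq_neg_one (hgm i) (hgval i) (hgunif i)) hgpair
      (by fun_prop) hY (hfam.comp (ψ := fun (b : Fin n → ℝ) i => b i * x i) measurable_id (by fun_prop)) (by norm_num)
  refine le_trans ?_ (one_sub_add_le_measure_of_compl_subset_union ?_ hmass hsign)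
  · rw [← ENNReal.ofReal_add (by norm_num) (by norm_num), ← ENNReal.ofReal_one,
      ← ENNReal.ofReal_sub _ (by norm_num), ENNReal.le_ofReal_iff_toReal_le
        (ENNReal.div_ne_top (by norm_num) (by norm_num)) (by norm_num)]
    norm_num
  · intro ω hω
    by_contra! h
    simp only [Set.mem_union, Set.mem_ofPred_eq, not_or, not_lt] at h
    refine hω (le_of_le_of_eq (abs_rpow_le_of_sq_le_mul_sum_sq (K := 3) (c := 9 * (α * M))
      (v := fun i => χ i ω * x i) Finset.univ hp0 hp.2 (by norm_num) ?_ ?_) ?_)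
    · simpa only [mul_assoc, ← (by norm_num : (3 : ℝ) ^ 2 = 9)] using h.2
    · simpa only [abs_mul_rpow_of_eq_zero_or_eq_one (hχval _ ω) _ hp0.ne'] using h.1
    · rw [Real.rpow_add (by norm_num)]
      norm_num
      ring

/-- For `p ∈ [1,2]`, pairwise independent uniform signs `gᵢ` and pairwise independent
`{0,1}`-valued `χᵢ` with `P[χᵢ = 1] = α`, where the family `(gᵢ)` is independent of the
family `(χᵢ)`, with probability at least `7/9` one has
`|Σᵢ gᵢ χᵢ xᵢ|^p ≤ 3^{2+p} α ‖x‖_p^p`. -/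
theorem rpow_randomized_sum_le_whp (p : ℝ) (hp : p ∈ Set.Icc (1 : ℝ) 2)
    (n : ℕ) (hn : 1 ≤ n) (x : Fin n → ℝ) (α : ℝ) (hα : α ∈ Set.Ioo (0 : ℝ) 1)
    {Ω : Type} [MeasurableSpace Ω] (P : Measure Ω) [IsProbabilityMeasure P]
    (g χ : Fin n → Ω → ℝ)
    (hgm : ∀ i, Measurable (g i)) (hχm : ∀ i, Measurable (χ i))
    (hgval : ∀ i ω, g i ω = 1 ∨ g i ω = -1)
    (hχval : ∀ i ω, χ i ω = 0 ∨ χ i ω = 1)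
    (hgunif : ∀ i, P {ω | g i ω = 1} = 1 / 2)
    (hχprob : ∀ i, P {ω | χ i ω = 1} = ENNReal.ofReal α)
    (hgpair : Pairwise fun i j => IndepFun (g i) (g j) P)
    (hχpair : Pairwise fun i j => IndepFun (χ i) (χ j) P)
    (hfam : IndepFun (fun ω i => g i ω) (fun ω i => χ i ω) P) :
    (7 : ℝ≥0∞) / 9 ≤
      P {ω | |∑ i, g i ω * χ i ω * x i| ^ p ≤ 3 ^ (2 + p) * α * ∑ i, |x i| ^ p} :=
  rpow_randomized_sum_le_whp_general p hp n x α hα P g χ hgm hχm hgval hχval hgunif hχprob hgpair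
    hfam
end

section
/- Fix p ≥ 1, an integer n ≥ 1, ω > 0, a real normed vector space X, and vectors x₁,…,xₙ ∈ X with Σ_{i=1}^n ‖xᵢ‖_X^p ≤ ω. Let α ≥ max(1, 9·n^{1−1/p}·ω^{1/p}). Suppose g₁,…,gₙ are arbitrary {−1,+1}-valued random variables and χ₁,…,χₙ are {0,1}-valued random variables with P[χᵢ = 1] = 1/α. Then P[‖Σ_{i=1}^n gᵢχᵢxᵢ‖_X ≤ 1] ≥ 8/9. -/
open MeasureTheory ProbabilityTheory
open scoped ENNReal NNReal

private lemma sum_le_hoelder (p : ℝ) (hp : 1 ≤ p)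
    (n : ℕ) (ω : ℝ) (hω : 0 < ω)
    (a : Fin n → ℝ) (ha : ∀ i, 0 ≤ a i) (hx : ∑ i, a i ^ p ≤ ω) :
    ∑ i, a i ≤ (n : ℝ) ^ (1 - 1 / p) * ω ^ (1 / p) := by
  have hp0 : (0:ℝ) < p := lt_of_lt_of_le one_pos hp
  have hn0 : (0:ℝ) ≤ n := by positivity
  have h1 : (∑ i, a i) ^ p ≤ (n : ℝ) ^ (p - 1) * ω := by
    calc (∑ i, a i) ^ p ≤ (n : ℝ) ^ (p - 1) * ∑ i, a i ^ p := by
          simpa using Real.rpow_sum_le_const_mul_sum_rpow_of_nonneg Finset.univ hp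
            (fun i _ => ha i)
      _ ≤ (n : ℝ) ^ (p - 1) * ω := by
          apply mul_le_mul_of_nonneg_left hx; positivity
  have hS0 : 0 ≤ ∑ i, a i := Finset.sum_nonneg fun i _ => ha i
  have h2 : ((∑ i, a i) ^ p) ^ (1/p) ≤ ((n : ℝ) ^ (p - 1) * ω) ^ (1/p) :=
    Real.rpow_le_rpow (by positivity) h1 (by positivity)
  rw [← Real.rpow_mul hS0, mul_one_div, div_self hp0.ne', Real.rpow_one] at h2
  calc ∑ i, a i ≤ ((n : ℝ) ^ (p - 1) * ω) ^ (1/p) := h2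
    _ = (n : ℝ) ^ (1 - 1/p) * ω ^ (1/p) := by
        rw [Real.mul_rpow (by positivity) hω.le, ← Real.rpow_mul hn0]
        congr 2
        field_simp

/-- Generalized `p`-type bound for an arbitrary normed space `X`, `p ≥ 1`: if
`Σᵢ ‖xᵢ‖^p ≤ ω` and `α ≥ max(1, 9 n^{1−1/p} ω^{1/p})`, then for arbitrary `±1`-valued
random variables `gᵢ` and `{0,1}`-valued `χᵢ` with `P[χᵢ = 1] = 1/α`,
`P[‖Σᵢ gᵢ χᵢ xᵢ‖ ≤ 1] ≥ 8/9`. -/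
theorem generalized_type_normed_space (p : ℝ) (hp : 1 ≤ p)
    (n : ℕ) (hn : 1 ≤ n) (ω : ℝ) (hω : 0 < ω)
    {X : Type} [NormedAddCommGroup X] [NormedSpace ℝ X]
    (x : Fin n → X) (hx : ∑ i, ‖x i‖ ^ p ≤ ω)
    (α : ℝ) (hα : max 1 (9 * (n : ℝ) ^ (1 - 1 / p) * ω ^ (1 / p)) ≤ α)
    {Ω : Type} [MeasurableSpace Ω] (P : Measure Ω) [IsProbabilityMeasure P]
    (g χ : Fin n → Ω → ℝ)
    (hgm : ∀ i, Measurable (g i)) (hχm : ∀ i, Measurable (χ i))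
    (hgval : ∀ i θ, g i θ = 1 ∨ g i θ = -1)
    (hχval : ∀ i θ, χ i θ = 0 ∨ χ i θ = 1)
    (hχprob : ∀ i, P {θ | χ i θ = 1} = ENNReal.ofReal (1 / α)) :
    (8 : ℝ≥0∞) / 9 ≤ P {θ | ‖∑ i, (g i θ * χ i θ) • x i‖ ≤ 1} := by
  have hα1 : (1:ℝ) ≤ α := le_trans (le_max_left _ _) hα
  have hα0 : (0:ℝ) < α := lt_of_lt_of_le one_pos hα1
  -- the dominating function
  set f : Ω → ℝ := fun θ => ∑ i, χ i θ * ‖x i‖ with hf_def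
  have hχ0 : ∀ i θ, 0 ≤ χ i θ := fun i θ => by rcases hχval i θ with h | h <;> simp [h]
  have hfm : Measurable f := Finset.measurable_sum _ fun i _ => (hχm i).mul_const _
  -- pointwise domination
  have hdom : ∀ θ, ‖∑ i, (g i θ * χ i θ) • x i‖ ≤ f θ := by
    intro θ
    calc ‖∑ i, (g i θ * χ i θ) • x i‖ ≤ ∑ i, ‖(g i θ * χ i θ) • x i‖ :=
          norm_sum_le _ _
      _ = f θ := by
          apply Finset.sum_congr rfl
          intro i _
          rw [norm_smul, Real.norm_eq_abs, abs_mul]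
          rcases hgval i θ with h | h <;> rcases hχval i θ with h' | h' <;>
            simp [h, h', abs_of_nonneg]
  -- inclusion of events
  have hsub : {θ | f θ ≤ 1} ⊆ {θ | ‖∑ i, (g i θ * χ i θ) • x i‖ ≤ 1} :=
    fun θ hθ => le_trans (hdom θ) hθ
  refine le_trans ?_ (measure_mono hsub)
  -- compute the integral of f
  have hint : ∫⁻ θ, ENNReal.ofReal (f θ) ∂P
      = ∑ i, ENNReal.ofReal ‖x i‖ * ENNReal.ofReal (1 / α) := by
    have h1 : ∀ θ, ENNReal.ofReal (f θ)
        = ∑ i, ENNReal.ofReal (χ i θ) * ENNReal.ofReal ‖x i‖ := by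
      intro θ
      rw [hf_def, ENNReal.ofReal_sum_of_nonneg (fun i _ => mul_nonneg (hχ0 i θ) (norm_nonneg _))]
      exact Finset.sum_congr rfl fun i _ => ENNReal.ofReal_mul (hχ0 i θ)
    simp only [h1]
    rw [lintegral_finset_sum _ (fun i _ => ((hχm i).ennreal_ofReal.mul_const _))]
    apply Finset.sum_congr rfl
    intro i _
    rw [lintegral_mul_const _ (hχm i).ennreal_ofReal, mul_comm]
    congr 1
    have hind : ∀ θ, ENNReal.ofReal (χ i θ)
        = Set.indicator {θ | χ i θ = 1} (fun _ => (1:ℝ≥0∞)) θ := by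
      intro θ
      rcases hχval i θ with h | h <;> simp [Set.indicator, h]
    have hms' : MeasurableSet {θ | χ i θ = 1} := hχm i (measurableSet_singleton 1)
    simp only [hind]
    rw [lintegral_indicator hms' _, lintegral_one, Measure.restrict_apply_univ, hχprob i]
  -- Markov
  have hmarkov : P {θ | 1 < f θ} ≤ ENNReal.ofReal (1/9) := by
    calc P {θ | 1 < f θ} ≤ P {θ | (1:ℝ≥0∞) ≤ ENNReal.ofReal (f θ)} := by
          apply measure_mono
          intro θ hθ
          simp only [Set.mem_setOf_eq] at *
          exact ENNReal.one_le_ofReal.2 hθ.le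
      _ ≤ ∫⁻ θ, ENNReal.ofReal (f θ) ∂P := by
          simpa using mul_meas_ge_le_lintegral₀ (hfm.ennreal_ofReal).aemeasurable 1
      _ = ∑ i, ENNReal.ofReal ‖x i‖ * ENNReal.ofReal (1 / α) := hint
      _ = ENNReal.ofReal ((∑ i, ‖x i‖) * (1/α)) := by
          rw [ENNReal.ofReal_mul' (by positivity), ENNReal.ofReal_sum_of_nonneg
            (fun i _ => norm_nonneg _), Finset.sum_mul]
      _ ≤ ENNReal.ofReal (1/9) := by
          apply ENNReal.ofReal_le_ofReal
          have hS : ∑ i, ‖x i‖ ≤ (n : ℝ) ^ (1 - 1 / p) * ω ^ (1 / p) :=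
            sum_le_hoelder p hp n ω hω _ (fun i => norm_nonneg _) hx
          have hM : 0 < (n : ℝ) ^ (1 - 1 / p) * ω ^ (1 / p) := by
            have : (0:ℝ) < n := by positivity
            positivity
          have hα9 : 9 * ((n : ℝ) ^ (1 - 1 / p) * ω ^ (1 / p)) ≤ α := by
            have := le_trans (le_max_right _ _) hα
            linarith [this]
          rw [one_div, ← div_eq_mul_inv, div_le_div_iff₀ hα0 (by norm_num)]
          nlinarith
  -- put everything together
  have hms : MeasurableSet {θ | 1 < f θ} := measurableSet_lt measurable_const hfm
  have hcompl : {θ | f θ ≤ 1} = {θ | 1 < f θ}ᶜ := by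
    ext θ; simp [not_lt]
  rw [hcompl, measure_compl hms (measure_ne_top P _), measure_univ]
  calc (8:ℝ≥0∞)/9 ≤ 1 - ENNReal.ofReal (1/9) := by
        rw [ENNReal.ofReal_div_of_pos (by norm_num)]
        simp only [ENNReal.ofReal_one, ENNReal.ofReal_ofNat]
        refine ENNReal.le_sub_of_add_le_right (by simp) ?_
        rw [ENNReal.div_add_div_same]
        norm_num
    _ ≤ 1 - P {θ | 1 < f θ} := tsub_le_tsub_left hmarkov 1
end

section
/- Let ε ∈ (0,1/8), let n and t be positive integers with t ≤ √(n/3) − 1, let m = ⌈n(1/2+ε)⌉, and let i be an integer with 0 ≤ i ≤ ⌈t/2⌉ − 1. Then the ratio of binomial coefficients satisfies C(n−t, m−i)/C(n, m) ≥ 2^{−t−2}·(1+2ε)^i·(1−2ε)^{t−i}. -/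
/-! With `p = 1/2 + ε`, `q = 1/2 - ε` and `k = t - i`, the ratio is `m^(i) (n-m)^(k) / n^(t)` in
falling factorials, and the left-hand side is `p^i q^k / 4`. Since `n^(t) ≤ n^t`, it suffices to
bound the numerator. A falling factorial satisfies `a^(j) ≥ x^j (1 - j(j+1)/(2x))` whenever
`j ≤ x ≤ a + 1`; applied with `x = np ≤ m` and `x = nq ≤ n - m + 1` this gives
`m^(i) (n-m)^(k) ≥ n^t p^i q^k (1 - S)(1 - T)` with `S + T = O(t^2 / n)`. The hypothesis
`t ≤ √(n/3) - 1` makes `S + T ≤ 3/4`, hence `(1 - S)(1 - T) ≥ 1/4`. -/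

theorem pow_mul_one_sub_le_descFactorial {a j : ℕ} {x : ℝ} (hjx : (j : ℝ) ≤ x)
    (hxa : x ≤ a + 1) : x ^ j * (1 - j * (j + 1) / (2 * x)) ≤ a.descFactorial j := by
  induction j with
  | zero => simp
  | succ j ih =>
    push_cast at hjx ⊢
    have hja : j ≤ a := by exact_mod_cast (show (j : ℝ) ≤ a by linarith)
    have hx : 0 < x := by linarith [j.cast_nonneg (α := ℝ)]
    have ih := ih (by linarith)
    have hfactor : x - 1 - j ≤ ((a - j : ℕ) : ℝ) := by rw [Nat.cast_sub hja]; linarith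
    have hstep : x ^ (j + 1) * (1 - (j + 1) * (j + 1 + 1) / (2 * x)) ≤
        (x - 1 - j) * (x ^ j * (1 - j * (j + 1) / (2 * x))) := by
      have : 0 ≤ x ^ j * j * (j + 1) ^ 2 / (2 * x) := by positivity
      calc _ = (x - 1 - j) * (x ^ j * (1 - j * (j + 1) / (2 * x))) -
            x ^ j * j * (j + 1) ^ 2 / (2 * x) := by
            field_simp; ring
        _ ≤ _ := by linarith
    rw [Nat.descFactorial_succ, Nat.cast_mul]
    calc _ ≤ _ := hstep
      _ ≤ (x - 1 - j) * a.descFactorial j := mul_le_mul_of_nonneg_left ih (by linarith)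
      _ ≤ _ := mul_le_mul_of_nonneg_right hfactor (by positivity)

theorem choose_sub_div_choose {n m t i : ℕ} (hmn : m ≤ n) (hit : i ≤ t) (him : i ≤ m)
    (hkm : t - i ≤ n - m) :
    ((n - t).choose (m - i) : ℝ) / n.choose m =
      m.descFactorial i * (n - m).descFactorial (t - i) / n.descFactorial t := by
  have htn : t ≤ n := by omega
  have hsub : n - t - (m - i) = n - m - (t - i) := by omega
  have h1 := Nat.factorial_mul_descFactorial htn
  have h2 := Nat.factorial_mul_descFactorial him
  have h3 := Nat.factorial_mul_descFactorial hkm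
  rw [Nat.cast_choose ℝ hmn, Nat.cast_choose ℝ (by omega : m - i ≤ n - t), hsub]
  rw [← h1, ← h2, ← h3]
  push_cast
  have : (n.descFactorial t : ℝ) ≠ 0 := by exact_mod_cast (Nat.descFactorial_pos.mpr htn).ne'
  field_simp

theorem mul_pow_div_four_le_descFactorial_mul {a b i k : ℕ} {x y : ℝ} (hix : (i : ℝ) ≤ x)
    (hky : (k : ℝ) ≤ y) (hxa : x ≤ a + 1) (hyb : y ≤ b + 1)
    (hsum : i * (i + 1) / (2 * x) + k * (k + 1) / (2 * y) ≤ 3 / 4) :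
    x ^ i * y ^ k / 4 ≤ a.descFactorial i * b.descFactorial k := by
  have hx : 0 ≤ x := i.cast_nonneg.trans hix
  have hy : 0 ≤ y := k.cast_nonneg.trans hky
  set S := (i * (i + 1) / (2 * x) : ℝ)
  set T := (k * (k + 1) / (2 * y) : ℝ)
  have hS : 0 ≤ S := by positivity
  have hT : 0 ≤ T := by positivity
  have hquarter : 1 / 4 ≤ (1 - S) * (1 - T) := by nlinarith
  calc x ^ i * y ^ k / 4 ≤ x ^ i * y ^ k * ((1 - S) * (1 - T)) := by
        rw [div_eq_mul_one_div]; gcongr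
    _ = x ^ i * (1 - S) * (y ^ k * (1 - T)) := by ring
    _ ≤ _ := mul_le_mul (pow_mul_one_sub_le_descFactorial hix hxa)
        (pow_mul_one_sub_le_descFactorial hky hyb)
        (mul_nonneg (by positivity) (by linarith)) (by positivity)

theorem pow_mul_pow_div_four_le_choose_sub_div_choose {n m t i : ℕ} {p q : ℝ} (hp : 0 ≤ p)
    (hq : 0 ≤ q) (hmn : m ≤ n) (hit : i ≤ t) (him : i ≤ m) (hkm : t - i ≤ n - m)
    (hip : (i : ℝ) ≤ n * p) (hkq : ((t - i : ℕ) : ℝ) ≤ n * q) (hpm : n * p ≤ m + 1)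
    (hqm : n * q ≤ (n - m : ℕ) + 1)
    (hsum : i * (i + 1) / (2 * (n * p)) + (t - i : ℕ) * ((t - i : ℕ) + 1) / (2 * (n * q)) ≤
      (3 / 4 : ℝ)) :
    p ^ i * q ^ (t - i) / 4 ≤ ((n - t).choose (m - i) : ℝ) / n.choose m := by
  have hxy := mul_pow_div_four_le_descFactorial_mul (a := m) (b := n - m) hip hkq hpm hqm hsum
  rw [choose_sub_div_choose hmn hit him hkm,
    le_div_iff₀ (by exact_mod_cast Nat.descFactorial_pos.mpr (by omega : t ≤ n))]
  calc p ^ i * q ^ (t - i) / 4 * n.descFactorial t ≤ p ^ i * q ^ (t - i) / 4 * n ^ t := by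
        gcongr
        exact_mod_cast Nat.descFactorial_le_pow n t
    _ = (n * p) ^ i * (n * q) ^ (t - i) / 4 := by
        rw [mul_pow, mul_pow, ← Nat.add_sub_cancel' hit, pow_add, Nat.add_sub_cancel_left]
        ring
    _ ≤ _ := hxy

theorem error_terms_le_three_quarters {x p q : ℝ} {i k : ℕ} (hp : 1 / 2 ≤ p) (hq : 3 / 8 ≤ q)
    (hx : 3 * ((i + k : ℕ) + 1 : ℝ) ^ 2 ≤ x) :
    i * (i + 1) / (2 * (x * p)) + k * (k + 1) / (2 * (x * q)) ≤ (3 / 4 : ℝ) := by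
  push_cast at hx
  have hi : (0 : ℝ) ≤ i := i.cast_nonneg
  have hk : (0 : ℝ) ≤ k := k.cast_nonneg
  have hx0 : 0 < x := by nlinarith
  calc _ ≤ i * (i + 1) / x + k * (k + 1) / (3 / 4 * x) := by
        gcongr ?_ + ?_ <;> apply div_le_div_of_nonneg_left <;> nlinarith
    _ ≤ 3 / 4 := by
        have hquad : i * (i + 1) + 4 / 3 * (k * (k + 1)) ≤ 3 / 4 * x := by
          nlinarith [mul_nonneg hi hk]
        rw [div_add_div _ _ hx0.ne' (by positivity), div_le_iff₀ (by positivity)]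
        nlinarith [mul_le_mul_of_nonneg_left hquad hx0.le]

theorem two_zpow_mul_pow_mul_pow {ε : ℝ} {i t : ℕ} (hit : i ≤ t) :
    (2 : ℝ) ^ (-(t : ℤ) - 2) * (1 + 2 * ε) ^ i * (1 - 2 * ε) ^ (t - i) =
      (1 / 2 + ε) ^ i * (1 / 2 - ε) ^ (t - i) / 4 := by
  obtain ⟨k, rfl⟩ := Nat.exists_eq_add_of_le hit
  rw [Nat.add_sub_cancel_left,
    show -((i + k : ℕ) : ℤ) - 2 = -((i + k + 2 : ℕ) : ℤ) by push_cast; ring, zpow_neg,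
    zpow_natCast, show 1 + 2 * ε = 2 * (1 / 2 + ε) by ring,
    show 1 - 2 * ε = 2 * (1 / 2 - ε) by ring]
  simp only [mul_pow, pow_add]
  field_simp
  ring

theorem choose_ratio_lower_bound_general (ε : ℝ) (hε : ε ∈ Set.Ioo (0 : ℝ) (1 / 8))
    (n t : ℕ) (htn : (t : ℝ) ≤ Real.sqrt ((n : ℝ) / 3) - 1)
    (m : ℕ) (hm : m = ⌈(n : ℝ) * (1 / 2 + ε)⌉₊)
    (i : ℕ) (hi : i + 1 ≤ ⌈(t : ℝ) / 2⌉₊) :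
    (2 : ℝ) ^ (-(t : ℤ) - 2) * (1 + 2 * ε) ^ i * (1 - 2 * ε) ^ (t - i) ≤
      ((n - t).choose (m - i) : ℝ) / (n.choose m : ℝ) := by
  obtain ⟨hε0, hε8⟩ := hε
  have hsq : 3 * ((t : ℝ) + 1) ^ 2 ≤ n := by
    have := Real.sq_sqrt (show (0 : ℝ) ≤ n / 3 by positivity)
    nlinarith [Real.sqrt_nonneg ((n : ℝ) / 3)]
  have hit : i ≤ t := by
    have : ⌈(t : ℝ) / 2⌉₊ ≤ t := Nat.ceil_le.mpr (by linarith [(t.cast_nonneg : (0 : ℝ) ≤ t)])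
    omega
  have hm_ge : n * (1 / 2 + ε) ≤ m := hm ▸ Nat.le_ceil _
  have hm_lt : (m : ℝ) < n * (1 / 2 + ε) + 1 := hm ▸ Nat.ceil_lt_add_one (by positivity)
  have hmn : m ≤ n := by exact_mod_cast (show (m : ℝ) ≤ n by nlinarith)
  have hi_t : (i : ℝ) ≤ t := by exact_mod_cast hit
  have hk_t : ((t - i : ℕ) : ℝ) ≤ t := by exact_mod_cast Nat.sub_le t i
  have ht_q : (t : ℝ) + 1 ≤ n * (1 / 2 - ε) := by nlinarith
  have hqm : n * (1 / 2 - ε) ≤ (n - m : ℕ) + 1 := by rw [Nat.cast_sub hmn]; linarith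
  have hkm : t - i ≤ n - m := by
    exact_mod_cast (show ((t - i : ℕ) : ℝ) ≤ (n - m : ℕ) by linarith)
  have him : i ≤ m := by exact_mod_cast (show (i : ℝ) ≤ m by nlinarith)
  rw [two_zpow_mul_pow_mul_pow hit]
  exact pow_mul_pow_div_four_le_choose_sub_div_choose (by linarith) (by linarith) hmn hit him hkm
    (by nlinarith) (by linarith) (by linarith) hqm
    (error_terms_le_three_quarters (by linarith) (by linarith) (by rwa [Nat.add_sub_cancel' hit]))

/-- Lower bound on the ratio of binomial coefficients from the Canetti–Even–Goldreich
lower-bound argument: for `ε ∈ (0,1/8)`, positive integers `n, t` with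
`t ≤ √(n/3) − 1`, `m = ⌈n(1/2+ε)⌉` and `0 ≤ i ≤ ⌈t/2⌉ − 1`,
`C(n−t, m−i)/C(n, m) ≥ 2^{−t−2} (1+2ε)^i (1−2ε)^{t−i}`. -/
theorem choose_ratio_lower_bound (ε : ℝ) (hε : ε ∈ Set.Ioo (0 : ℝ) (1 / 8))
    (n t : ℕ) (hn : 0 < n) (ht : 0 < t) (htn : (t : ℝ) ≤ Real.sqrt ((n : ℝ) / 3) - 1)
    (m : ℕ) (hm : m = ⌈(n : ℝ) * (1 / 2 + ε)⌉₊)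
    (i : ℕ) (hi : i + 1 ≤ ⌈(t : ℝ) / 2⌉₊) :
    (2 : ℝ) ^ (-(t : ℤ) - 2) * (1 + 2 * ε) ^ i * (1 - 2 * ε) ^ (t - i) ≤
      ((n - t).choose (m - i) : ℝ) / (n.choose m : ℝ) :=
  choose_ratio_lower_bound_general ε hε n t htn m hm i hi
end
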